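/- arXiv:2411.03263 — 3 statements merged into one kernel-verified Lean document; each statement's English description precedes it below -/
import Mathlib

section
/- Let f : [a,b] → ℝ be twice differentiable with 0 ≤ m ≤ f''(x) ≤ M for all x ∈ [a,b]. Then for any probability measure P on [a,b], there exists μ ∈ [m, M] such that E_{x∼P}[f(x)] − f(E_{x∼P}[x]) = (1/2) · μ · Var_{x∼P}[x]. -/
open MeasureTheory ProbabilityTheory Real

/-!
Subtracting the quadratic `c/2 · x²` from `f` lowers `f''` by `c` and lowers the Jensen gap
`E[f] - f(E[x])` by `c/2 · Var[x]`. Hence `f - m/2 · x²` is convex and `f - M/2 · x²` is concave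
on `[a,b]`, and Jensen's inequality for each of them gives
`m/2 · Var[x] ≤ E[f] - f(E[x]) ≤ M/2 · Var[x]`; the intermediate value theorem then produces `μ`.
-/

noncomputable def jensenGap (P : Measure ℝ) (f : ℝ → ℝ) : ℝ :=
  (∫ x, f x ∂P) - f (∫ x, x ∂P)

section Quadratic

variable {f : ℝ → ℝ} {D : Set ℝ} {c : ℝ}

lemma hasDerivAt_sub_half_mul_sq {x : ℝ} (hf : DifferentiableAt ℝ f x) (c : ℝ) :
    HasDerivAt (fun y => f y - c / 2 * y ^ 2) (deriv f x - c * x) x :=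
  (hf.hasDerivAt.sub ((hasDerivAt_pow 2 x).const_mul (c / 2))).congr_deriv (by ring)

lemma hasDerivAt_deriv_sub_mul {x : ℝ} (hf : DifferentiableAt ℝ (deriv f) x) (c : ℝ) :
    HasDerivAt (fun y => deriv f y - c * y) (deriv (deriv f) x - c) x :=
  (hf.hasDerivAt.sub ((hasDerivAt_id' x).const_mul c)).congr_deriv (by rw [mul_one])

lemma continuousOn_sub_half_mul_sq (hf : ContinuousOn f D) (c : ℝ) :
    ContinuousOn (fun x => f x - c / 2 * x ^ 2) D :=
  hf.sub (by fun_prop)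

variable (hD : Convex ℝ D) (hf1 : ∀ x ∈ D, DifferentiableAt ℝ f x)
  (hf2 : ∀ x ∈ D, DifferentiableAt ℝ (deriv f) x)
include hD hf1 hf2

lemma convexOn_sub_half_mul_sq (hc : ∀ x ∈ D, c ≤ deriv (deriv f) x) :
    ConvexOn ℝ D (fun x => f x - c / 2 * x ^ 2) :=
  convexOn_of_hasDerivWithinAt2_nonneg hD
    (continuousOn_sub_half_mul_sq (fun x hx => (hf1 x hx).continuousAt.continuousWithinAt) c)
    (fun x hx => (hasDerivAt_sub_half_mul_sq (hf1 x (interior_subset hx)) c).hasDerivWithinAt)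
    (fun x hx => (hasDerivAt_deriv_sub_mul (hf2 x (interior_subset hx)) c).hasDerivWithinAt)
    (fun x hx => sub_nonneg.2 (hc x (interior_subset hx)))

lemma concaveOn_sub_half_mul_sq (hc : ∀ x ∈ D, deriv (deriv f) x ≤ c) :
    ConcaveOn ℝ D (fun x => f x - c / 2 * x ^ 2) :=
  concaveOn_of_hasDerivWithinAt2_nonpos hD
    (continuousOn_sub_half_mul_sq (fun x hx => (hf1 x hx).continuousAt.continuousWithinAt) c)
    (fun x hx => (hasDerivAt_sub_half_mul_sq (hf1 x (interior_subset hx)) c).hasDerivWithinAt)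
    (fun x hx => (hasDerivAt_deriv_sub_mul (hf2 x (interior_subset hx)) c).hasDerivWithinAt)
    (fun x hx => sub_nonpos.2 (hc x (interior_subset hx)))

end Quadratic

lemma ContinuousOn.integrable_of_ae_mem {X : Type*} [TopologicalSpace X] [T2Space X]
    [MeasurableSpace X] [OpensMeasurableSpace X] {P : Measure X} [IsFiniteMeasureOnCompacts P]
    {s : Set X} {f : X → ℝ} (hs : IsCompact s) (hf : ContinuousOn f s) (hP : ∀ᵐ x ∂P, x ∈ s) :
    Integrable f P :=
  Measure.restrict_eq_self_of_ae_mem hP ▸ hf.integrableOn_compact hs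

section JensenGap

variable {P : Measure ℝ} [IsProbabilityMeasure P] {f : ℝ → ℝ} {s : Set ℝ}

lemma jensenGap_sub_half_mul_sq (hf : Integrable f P) (hid : MemLp id 2 P) (c : ℝ) :
    jensenGap P (fun x => f x - c / 2 * x ^ 2) = jensenGap P f - c / 2 * Var[id; P] := by
  have hsq : Integrable (fun x : ℝ => x ^ 2) P := hid.integrable_sq
  rw [variance_eq_sub hid, jensenGap, jensenGap, integral_sub hf (hsq.const_mul _),
    integral_const_mul]
  simp only [Pi.pow_apply, id]
  ring

lemma half_mul_variance_le_jensenGap {c : ℝ} (hs : IsClosed s) (hP : ∀ᵐ x ∂P, x ∈ s)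
    (hf : Integrable f P) (hid : MemLp id 2 P)
    (hconv : ConvexOn ℝ s (fun x => f x - c / 2 * x ^ 2))
    (hcont : ContinuousOn (fun x => f x - c / 2 * x ^ 2) s) :
    c / 2 * Var[id; P] ≤ jensenGap P f := by
  have := hconv.map_integral_le hcont hs hP (hid.integrable one_le_two)
    (hf.sub (hid.integrable_sq.const_mul _))
  have hgap : 0 ≤ jensenGap P (fun x => f x - c / 2 * x ^ 2) := sub_nonneg.2 this
  rw [jensenGap_sub_half_mul_sq hf hid] at hgap
  linarith

lemma jensenGap_le_half_mul_variance {c : ℝ} (hs : IsClosed s) (hP : ∀ᵐ x ∂P, x ∈ s)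
    (hf : Integrable f P) (hid : MemLp id 2 P)
    (hconc : ConcaveOn ℝ s (fun x => f x - c / 2 * x ^ 2))
    (hcont : ContinuousOn (fun x => f x - c / 2 * x ^ 2) s) :
    jensenGap P f ≤ c / 2 * Var[id; P] := by
  have := hconc.le_map_integral hcont hs hP (hid.integrable one_le_two)
    (hf.sub (hid.integrable_sq.const_mul _))
  have hgap : jensenGap P (fun x => f x - c / 2 * x ^ 2) ≤ 0 := sub_nonpos.2 this
  rw [jensenGap_sub_half_mul_sq hf hid] at hgap
  linarith

end JensenGap

theorem holder_defect_general (a b m M : ℝ) (hab : a ≤ b) (f : ℝ → ℝ)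
    (hf1 : ∀ x ∈ Set.Icc a b, DifferentiableAt ℝ f x)
    (hf2 : ∀ x ∈ Set.Icc a b, DifferentiableAt ℝ (deriv f) x)
    (hmM : ∀ x ∈ Set.Icc a b, m ≤ deriv (deriv f) x ∧ deriv (deriv f) x ≤ M)
    (P : Measure ℝ) [IsProbabilityMeasure P] (hsupp : P (Set.Icc a b)ᶜ = 0) :
    ∃ μ ∈ Set.Icc m M,
      (∫ x, f x ∂P) - f (∫ x, x ∂P)
        = (1 / 2) * μ * ∫ x, (x - ∫ y, y ∂P) ^ 2 ∂P := by
  have hP : ∀ᵐ x ∂P, x ∈ Set.Icc a b := ae_iff.2 hsupp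
  have hcont : ContinuousOn f (Set.Icc a b) := fun x hx =>
    (hf1 x hx).continuousAt.continuousWithinAt
  have hf : Integrable f P := hcont.integrable_of_ae_mem isCompact_Icc hP
  have hid : MemLp id 2 P := memLp_of_bounded hP aestronglyMeasurable_id 2
  have hlow := half_mul_variance_le_jensenGap isClosed_Icc hP hf hid
    (convexOn_sub_half_mul_sq (convex_Icc a b) hf1 hf2 fun x hx => (hmM x hx).1)
    (continuousOn_sub_half_mul_sq hcont m)
  have hup := jensenGap_le_half_mul_variance isClosed_Icc hP hf hid
    (concaveOn_sub_half_mul_sq (convex_Icc a b) hf1 hf2 fun x hx => (hmM x hx).2)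
    (continuousOn_sub_half_mul_sq hcont M)
  obtain ⟨hma, haM⟩ := hmM a (Set.left_mem_Icc.2 hab)
  obtain ⟨μ, hμ, hgap⟩ := intermediate_value_Icc (hma.trans haM)
    (f := fun μ => μ / 2 * Var[id; P]) (by fun_prop) ⟨hlow, hup⟩
  have hvar : Var[id; P] = ∫ x, (x - ∫ y, y ∂P) ^ 2 ∂P := variance_eq_integral aemeasurable_id
  refine ⟨μ, hμ, ?_⟩
  rw [← hvar, ← jensenGap, ← hgap]
  ring

/-- Hölder's defect formula: for a twice differentiable function `f` on `[a,b]` with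
`0 ≤ m ≤ f'' ≤ M` there, and any probability measure `P` supported on `[a,b]`, there is
`μ ∈ [m,M]` with `E[f] - f(E[x]) = (1/2)·μ·Var[x]`. -/
theorem holder_defect (a b m M : ℝ) (hab : a ≤ b) (f : ℝ → ℝ)
    (hf1 : ∀ x ∈ Set.Icc a b, DifferentiableAt ℝ f x)
    (hf2 : ∀ x ∈ Set.Icc a b, DifferentiableAt ℝ (deriv f) x)
    (hm0 : 0 ≤ m)
    (hmM : ∀ x ∈ Set.Icc a b, m ≤ deriv (deriv f) x ∧ deriv (deriv f) x ≤ M)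
    (P : Measure ℝ) [IsProbabilityMeasure P] (hsupp : P (Set.Icc a b)ᶜ = 0) :
    ∃ μ ∈ Set.Icc m M,
      (∫ x, f x ∂P) - f (∫ x, x ∂P)
        = (1 / 2) * μ * ∫ x, (x - ∫ y, y ∂P) ^ 2 ∂P :=
  holder_defect_general a b m M hab f hf1 hf2 hmM P hsupp
end

section
/- Let f : [a,b] → ℝ with 0 < a < b be the function f(x) = log x. For any probability measure P on [a,b], the Jensen gap satisfies log(E_{x∼P}[x]) − E_{x∼P}[log x] ≤ (1/(2a²)) · Var_{x∼P}[x] and log(E_{x∼P}[x]) − E_{x∼P}[log x] ≥ (1/(2b²)) · Var_{x∼P}[x]. -/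
/-!
Both bounds are Jensen's inequality in disguise. If `c ≤ φ'' ≤ C` on a compact interval,
then `φ x - c x² / 2` and `C x² / 2 - φ x` are convex there, and Jensen's inequality for these two
functions turns into `c / 2 · Var ≤ E[φ] - φ(E[x]) ≤ C / 2 · Var`, the quadratic terms producing
the variance. For `φ = -log` on `[a, b]` one has `φ'' x = 1 / x² ∈ [1 / b², 1 / a²]`.
-/

open MeasureTheory Set Real

lemma ContinuousOn.integrable_of_isCompact_of_ae_mem {X E : Type*} [TopologicalSpace X]
    [MeasurableSpace X] [OpensMeasurableSpace X] [T2Space X] [NormedAddCommGroup E]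
    {μ : Measure X} [IsFiniteMeasure μ] {K : Set X} {f : X → E} (hf : ContinuousOn f K)
    (hK : IsCompact K) (hμ : ∀ᵐ x ∂μ, x ∈ K) : Integrable f μ := by
  simpa only [IntegrableOn, Measure.restrict_eq_self_of_ae_mem hμ]
    using hf.integrableOn_compact (μ := μ) hK

lemma integral_sub_integral_sq_eq {P : Measure ℝ} [IsProbabilityMeasure P]
    (hsq : Integrable (fun x : ℝ ↦ x ^ 2) P) :
    ∫ x, (x - ∫ y, y ∂P) ^ 2 ∂P = ∫ x, x ^ 2 ∂P - (∫ x, x ∂P) ^ 2 := by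
  have hX : MemLp id 2 P := (memLp_two_iff_integrable_sq aestronglyMeasurable_id).2 hsq
  simpa using (ProbabilityTheory.variance_eq_integral aemeasurable_id).symm.trans
    (ProbabilityTheory.variance_eq_sub hX)

lemma convexOn_sub_mul_sq_of_le_deriv2 {D : Set ℝ} (hD : Convex ℝ D) {φ φ' φ'' : ℝ → ℝ} {c : ℝ}
    (hφ : ContinuousOn φ D) (hφ' : ∀ x ∈ interior D, HasDerivAt φ (φ' x) x)
    (hφ'' : ∀ x ∈ interior D, HasDerivAt φ' (φ'' x) x) (hc : ∀ x ∈ interior D, c ≤ φ'' x) :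
    ConvexOn ℝ D fun x ↦ φ x - c / 2 * x ^ 2 := by
  refine convexOn_of_hasDerivWithinAt2_nonneg (f' := fun x ↦ φ' x - c * x)
    (f'' := fun x ↦ φ'' x - c) hD (hφ.sub (by fun_prop)) (fun x hx ↦ ?_) (fun x hx ↦ ?_)
    (fun x hx ↦ sub_nonneg.2 (hc x hx))
  · have hsq := (hasDerivAt_pow 2 x).const_mul (c / 2)
    refine ((hφ' x hx).sub hsq).hasDerivWithinAt.congr_deriv ?_
    ring
  · have hlin := ((hasDerivAt_id' x).const_mul c).congr_deriv (mul_one c)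
    exact ((hφ'' x hx).sub hlin).hasDerivWithinAt

section JensenGap

variable {P : Measure ℝ} [IsProbabilityMeasure P] {K : Set ℝ} {φ : ℝ → ℝ}

theorem mul_integral_sq_le_integral_sub_of_convexOn {c : ℝ} (hK : IsCompact K)
    (hφ : ConvexOn ℝ K fun x ↦ φ x - c / 2 * x ^ 2) (hφc : ContinuousOn φ K)
    (hP : ∀ᵐ x ∂P, x ∈ K) :
    c / 2 * ∫ x, (x - ∫ y, y ∂P) ^ 2 ∂P ≤ ∫ x, φ x ∂P - φ (∫ x, x ∂P) := by
  have hint {f : ℝ → ℝ} (hf : ContinuousOn f K) : Integrable f P :=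
    hf.integrable_of_isCompact_of_ae_mem hK hP
  have hsq : Integrable (fun x : ℝ ↦ x ^ 2) P := hint (continuousOn_id.pow 2)
  have jensen := hφ.map_integral_le (hφc.sub (by fun_prop)) hK.isClosed hP
    (hint continuousOn_id) ((hint hφc).sub (hsq.const_mul _))
  rw [integral_sub (hint hφc) (hsq.const_mul _), integral_const_mul] at jensen
  rw [integral_sub_integral_sq_eq hsq]
  linarith

theorem integral_sub_map_integral_mem_Icc_of_deriv2_mem_Icc {φ' φ'' : ℝ → ℝ} {c C : ℝ}
    (hK : IsCompact K) (hKc : Convex ℝ K) (hφ : ContinuousOn φ K)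
    (hφ' : ∀ x ∈ interior K, HasDerivAt φ (φ' x) x)
    (hφ'' : ∀ x ∈ interior K, HasDerivAt φ' (φ'' x) x)
    (hbounds : ∀ x ∈ interior K, φ'' x ∈ Icc c C) (hP : ∀ᵐ x ∂P, x ∈ K) :
    ∫ x, φ x ∂P - φ (∫ x, x ∂P) ∈
      Icc (c / 2 * ∫ x, (x - ∫ y, y ∂P) ^ 2 ∂P) (C / 2 * ∫ x, (x - ∫ y, y ∂P) ^ 2 ∂P) := by
  have hconvex := convexOn_sub_mul_sq_of_le_deriv2 (φ := fun x ↦ -φ x) hKc hφ.neg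
    (fun x hx ↦ (hφ' x hx).neg) (fun x hx ↦ (hφ'' x hx).neg)
    (fun x hx ↦ neg_le_neg (hbounds x hx).2)
  have hupper := mul_integral_sq_le_integral_sub_of_convexOn hK hconvex hφ.neg hP
  rw [integral_neg] at hupper
  refine ⟨mul_integral_sq_le_integral_sub_of_convexOn hK ?_ hφ hP, by linarith⟩
  exact convexOn_sub_mul_sq_of_le_deriv2 hKc hφ hφ' hφ'' fun x hx ↦ (hbounds x hx).1

end JensenGap

theorem jensen_gap_log_two_sided_general (a b : ℝ) (ha : 0 < a)
    (P : Measure ℝ) [IsProbabilityMeasure P] (hsupp : P (Set.Icc a b)ᶜ = 0) :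
    Real.log (∫ x, x ∂P) - (∫ x, Real.log x ∂P)
        ≤ (1 / (2 * a ^ 2)) * ∫ x, (x - ∫ y, y ∂P) ^ 2 ∂P
    ∧ Real.log (∫ x, x ∂P) - (∫ x, Real.log x ∂P)
        ≥ (1 / (2 * b ^ 2)) * ∫ x, (x - ∫ y, y ∂P) ^ 2 ∂P := by
  have hlog : ContinuousOn (fun x ↦ -log x) (Icc a b) :=
    (continuousOn_log.mono fun x hx ↦ (ha.trans_le hx.1).ne').neg
  have hpos : ∀ x ∈ interior (Icc a b), 0 < x := by
    rw [interior_Icc]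
    exact fun x hx ↦ ha.trans hx.1
  have hderiv2 : ∀ x ∈ interior (Icc a b), (x ^ 2)⁻¹ ∈ Icc (b ^ 2)⁻¹ (a ^ 2)⁻¹ := by
    intro x hx
    have hx0 := hpos x hx
    rw [interior_Icc] at hx
    exact ⟨inv_anti₀ (by positivity) (pow_le_pow_left₀ hx0.le hx.2.le 2),
      inv_anti₀ (by positivity) (pow_le_pow_left₀ ha.le hx.1.le 2)⟩
  obtain ⟨hlower, hupper⟩ := integral_sub_map_integral_mem_Icc_of_deriv2_mem_Icc isCompact_Icc
    (convex_Icc a b) hlog (fun x hx ↦ (hasDerivAt_log (hpos x hx).ne').neg)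
    (fun x hx ↦ (hasDerivAt_inv (hpos x hx).ne').neg.congr_deriv (neg_neg _)) hderiv2
    (mem_ae_iff.2 hsupp)
  rw [integral_neg] at hlower hupper
  rw [show 1 / (2 * a ^ 2) = (a ^ 2)⁻¹ / 2 by ring, show 1 / (2 * b ^ 2) = (b ^ 2)⁻¹ / 2 by ring]
  constructor <;> linarith

/-- Two-sided Jensen-gap bound for `log` on `[a,b]` with `0 < a < b`:
`Var/(2b²) ≤ log(E[x]) − E[log x] ≤ Var/(2a²)`. -/
theorem jensen_gap_log_two_sided (a b : ℝ) (ha : 0 < a) (hab : a < b)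
    (P : Measure ℝ) [IsProbabilityMeasure P] (hsupp : P (Set.Icc a b)ᶜ = 0) :
    Real.log (∫ x, x ∂P) - (∫ x, Real.log x ∂P)
        ≤ (1 / (2 * a ^ 2)) * ∫ x, (x - ∫ y, y ∂P) ^ 2 ∂P
    ∧ Real.log (∫ x, x ∂P) - (∫ x, Real.log x ∂P)
        ≥ (1 / (2 * b ^ 2)) * ∫ x, (x - ∫ y, y ∂P) ^ 2 ∂P :=
  jensen_gap_log_two_sided_general a b ha P hsupp
end

section
/- Let P be a probability measure on data space, and for parameters (θ, ψ) let L(d, θ, ψ) ∈ [a, b] with 0 < a ≤ b be a bounded likelihood. Then for any probability measure P_Ψ over ψ and any fixed d, the Jensen gap log(E_{ψ∼P_Ψ}[L(d,θ,ψ)]) − E_{ψ∼P_Ψ}[log L(d,θ,ψ)] lies in the interval [Var_{ψ}[L(d,θ,ψ)]/(2b²), Var_{ψ}[L(d,θ,ψ)]/(2a²)]. -/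
open MeasureTheory

/-! Write `φ_c x = x² / (2c²) + log x`. On `[a, b] ⊆ (0, ∞)` the function `φ_a` is convex and
`φ_b` is concave, since `φ_c' x = x / c² + 1 / x` increases or decreases according as `xy ≥ c²`
or `xy ≤ c²`. For `X` with values in `[a, b]`,
`E[φ_c X] - φ_c (E X) = Var X / (2c²) - (log E X - E[log X])`,
so Jensen's inequality for `φ_a` and for `φ_b` gives the two bounds on the Jensen gap of `log`. -/

open ProbabilityTheory Real Set

theorem hasDerivAt_sq_div_add_log (c : ℝ) {x : ℝ} (hx : x ≠ 0) :
    HasDerivAt (fun y => y ^ 2 / (2 * c ^ 2) + log y) (x / c ^ 2 + x⁻¹) x := by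
  refine (((hasDerivAt_pow 2 x).div_const (2 * c ^ 2)).add (hasDerivAt_log hx)).congr_deriv ?_
  push_cast
  ring

theorem continuousOn_sq_div_add_log (c : ℝ) {s : Set ℝ} (hs : 0 ∉ s) :
    ContinuousOn (fun x => x ^ 2 / (2 * c ^ 2) + log x) s :=
  (continuousOn_pow 2).div_const _ |>.add (continuousOn_log.mono fun _ hx h => hs (h ▸ hx))

theorem convexOn_sq_div_add_log {a : ℝ} (ha : 0 < a) :
    ConvexOn ℝ (Ici a) (fun x => x ^ 2 / (2 * a ^ 2) + log x) := by
  have hderiv (x : ℝ) (hx : x ∈ Ici a) := hasDerivAt_sq_div_add_log a (ha.trans_le hx).ne'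
  refine MonotoneOn.convexOn_of_deriv (convex_Ici a)
    (fun x hx => (hderiv x hx).continuousAt.continuousWithinAt)
    (fun x hx => (hderiv x (interior_subset hx)).differentiableAt.differentiableWithinAt) ?_
  rw [interior_Ici]
  intro x (hx : a < x) y (hy : a < y) hxy
  rw [(hderiv x hx.le).deriv, (hderiv y hy.le).deriv]
  have hxy_ge : a ^ 2 ≤ x * y := by nlinarith
  have hslope : (y - x) / (x * y) ≤ (y - x) / a ^ 2 :=
    div_le_div_of_nonneg_left (sub_nonneg.mpr hxy) (by positivity) hxy_ge
  linarith [inv_sub_inv (ha.trans hx).ne' (ha.trans hy).ne', sub_div y x (a ^ 2)]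

theorem concaveOn_sq_div_add_log (b : ℝ) :
    ConcaveOn ℝ (Ioc 0 b) (fun x => x ^ 2 / (2 * b ^ 2) + log x) := by
  have hderiv (x : ℝ) (hx : x ∈ Ioc 0 b) := hasDerivAt_sq_div_add_log b hx.1.ne'
  refine AntitoneOn.concaveOn_of_deriv (convex_Ioc 0 b)
    (fun x hx => (hderiv x hx).continuousAt.continuousWithinAt)
    (fun x hx => (hderiv x (interior_subset hx)).differentiableAt.differentiableWithinAt) ?_
  rw [interior_Ioc]
  intro x hx y hy hxy
  rw [(hderiv x (Ioo_subset_Ioc_self hx)).deriv, (hderiv y (Ioo_subset_Ioc_self hy)).deriv]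
  have hxy_le : x * y ≤ b ^ 2 := by nlinarith [hx.1, hx.2, hy.1, hy.2]
  have hslope : (y - x) / b ^ 2 ≤ (y - x) / (x * y) :=
    div_le_div_of_nonneg_left (sub_nonneg.mpr hxy) (mul_pos hx.1 hy.1) hxy_le
  linarith [inv_sub_inv hx.1.ne' hy.1.ne', sub_div y x (b ^ 2)]

section BoundedRandomVariable

variable {Ω : Type*} [MeasurableSpace Ω] {μ : Measure Ω} {X : Ω → ℝ} {a b : ℝ}

theorem AEMeasurable.of_log (hpos : ∀ᵐ ω ∂μ, 0 < X ω)
    (h : AEMeasurable (fun ω => log (X ω)) μ) : AEMeasurable X μ :=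
  (measurable_exp.comp_aemeasurable h).congr (hpos.mono fun _ hω => exp_log hω)

theorem AEMeasurable.of_sq (hnonneg : ∀ᵐ ω ∂μ, 0 ≤ X ω)
    (h : AEMeasurable (fun ω => X ω ^ 2) μ) : AEMeasurable X μ :=
  (continuous_sqrt.measurable.comp_aemeasurable h).congr (hnonneg.mono fun _ hω => sqrt_sq hω)

theorem integrable_comp_of_continuousOn_Icc [IsFiniteMeasure μ] {g : ℝ → ℝ}
    (hgm : Measurable g) (hg : ContinuousOn g (Icc a b)) (hX : AEMeasurable X μ)
    (hXab : ∀ᵐ ω ∂μ, X ω ∈ Icc a b) : Integrable (fun ω => g (X ω)) μ := by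
  obtain ⟨C, hC⟩ := isCompact_Icc.exists_bound_of_continuousOn hg
  exact .of_bound (hgm.comp_aemeasurable hX).aestronglyMeasurable C (hXab.mono fun _ h => hC _ h)

variable [IsProbabilityMeasure μ]

theorem integral_sq_div_add_log_sub (c : ℝ) (ha : 0 < a) (hX : AEMeasurable X μ)
    (hXab : ∀ᵐ ω ∂μ, X ω ∈ Icc a b) :
    (∫ ω, (X ω ^ 2 / (2 * c ^ 2) + log (X ω)) ∂μ)
        - ((∫ ω, X ω ∂μ) ^ 2 / (2 * c ^ 2) + log (∫ ω, X ω ∂μ))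
      = Var[X; μ] / (2 * c ^ 2) - (log (∫ ω, X ω ∂μ) - ∫ ω, log (X ω) ∂μ) := by
  have hsq := integrable_comp_of_continuousOn_Icc (g := (· ^ 2)) (by fun_prop) (by fun_prop) hX hXab
  have hlog := integrable_comp_of_continuousOn_Icc measurable_log
    (continuousOn_log.mono fun _ hx => (ha.trans_le hx.1).ne') hX hXab
  have hL2 : MemLp X 2 μ := (memLp_two_iff_integrable_sq hX.aestronglyMeasurable).mpr hsq
  rw [variance_eq_sub hL2, integral_add (hsq.div_const _) hlog, integral_div]
  simp only [Pi.pow_apply]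
  ring

theorem variance_div_le_log_integral_sub_integral_log (ha : 0 < a) (hX : AEMeasurable X μ)
    (hXab : ∀ᵐ ω ∂μ, X ω ∈ Icc a b) :
    Var[X; μ] / (2 * b ^ 2) ≤ log (∫ ω, X ω ∂μ) - ∫ ω, log (X ω) ∂μ := by
  have h0 : 0 ∉ Icc a b := fun h => ha.not_ge h.1
  have hjensen := ((concaveOn_sq_div_add_log b).subset (Icc_subset_Ioc ha le_rfl)
    (convex_Icc a b)).le_map_integral (continuousOn_sq_div_add_log b h0) isClosed_Icc hXab
    (integrable_comp_of_continuousOn_Icc (g := id) measurable_id continuousOn_id hX hXab)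
    (integrable_comp_of_continuousOn_Icc (by fun_prop) (continuousOn_sq_div_add_log b h0) hX hXab)
  linarith [integral_sq_div_add_log_sub b ha hX hXab]

theorem log_integral_sub_integral_log_le_variance_div (ha : 0 < a) (hX : AEMeasurable X μ)
    (hXab : ∀ᵐ ω ∂μ, X ω ∈ Icc a b) :
    log (∫ ω, X ω ∂μ) - ∫ ω, log (X ω) ∂μ ≤ Var[X; μ] / (2 * a ^ 2) := by
  have h0 : 0 ∉ Icc a b := fun h => ha.not_ge h.1
  have hjensen := ((convexOn_sq_div_add_log ha).subset Icc_subset_Ici_self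
    (convex_Icc a b)).map_integral_le (continuousOn_sq_div_add_log a h0) isClosed_Icc hXab
    (integrable_comp_of_continuousOn_Icc (g := id) measurable_id continuousOn_id hX hXab)
    (integrable_comp_of_continuousOn_Icc (by fun_prop) (continuousOn_sq_div_add_log a h0) hX hXab)
  linarith [integral_sq_div_add_log_sub a ha hX hXab]

end BoundedRandomVariable

theorem jensen_gap_likelihood_marginalization_general
    {D T S : Type*} [MeasurableSpace S]
    (PPsi : Measure S) [IsProbabilityMeasure PPsi]
    (L : D → T → S → ℝ) (a b : ℝ) (ha : 0 < a)
    (d : D) (θ : T)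
    (hL : ∀ ψ, L d θ ψ ∈ Set.Icc a b) :
    Real.log (∫ ψ, L d θ ψ ∂PPsi) - (∫ ψ, Real.log (L d θ ψ) ∂PPsi)
      ∈ Set.Icc
          ((∫ ψ, (L d θ ψ - ∫ ψ', L d θ ψ' ∂PPsi) ^ 2 ∂PPsi) / (2 * b ^ 2))
          ((∫ ψ, (L d θ ψ - ∫ ψ', L d θ ψ' ∂PPsi) ^ 2 ∂PPsi) / (2 * a ^ 2)) := by
  by_cases hX : AEMeasurable (L d θ) PPsi
  · rw [← variance_eq_integral hX]
    exact ⟨variance_div_le_log_integral_sub_integral_log ha hX (ae_of_all _ hL),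
      log_integral_sub_integral_log_le_variance_div ha hX (ae_of_all _ hL)⟩
  -- Otherwise all three integrals take the junk value `0`.
  have hpos : ∀ᵐ ψ ∂PPsi, 0 < L d θ ψ := ae_of_all _ fun ψ => ha.trans_le (hL ψ).1
  have hmean : ∫ ψ, L d θ ψ ∂PPsi = 0 := integral_undef fun h => hX h.aemeasurable
  have hlog : ∫ ψ, log (L d θ ψ) ∂PPsi = 0 :=
    integral_undef fun h => hX (.of_log hpos h.aemeasurable)
  have hsq : ∫ ψ, L d θ ψ ^ 2 ∂PPsi = 0 :=
    integral_undef fun h => hX (.of_sq (hpos.mono fun _ h => h.le) h.aemeasurable)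
  simp [hmean, hlog, hsq]

/-- Two-sided Jensen-gap bound for the marginalization over task parameters of a bounded
likelihood: if `L(d,θ,ψ) ∈ [a,b]` with `0 < a`, then for fixed `d, θ` the Jensen gap
`log E_ψ[L] − E_ψ[log L]` lies in `[Var_ψ[L]/(2b²), Var_ψ[L]/(2a²)]`. -/
theorem jensen_gap_likelihood_marginalization
    {D T S : Type*} [MeasurableSpace S]
    (PPsi : Measure S) [IsProbabilityMeasure PPsi]
    (L : D → T → S → ℝ) (a b : ℝ) (ha : 0 < a) (hab : a ≤ b)
    (d : D) (θ : T)
    (hL : ∀ ψ, L d θ ψ ∈ Set.Icc a b) :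
    Real.log (∫ ψ, L d θ ψ ∂PPsi) - (∫ ψ, Real.log (L d θ ψ) ∂PPsi)
      ∈ Set.Icc
          ((∫ ψ, (L d θ ψ - ∫ ψ', L d θ ψ' ∂PPsi) ^ 2 ∂PPsi) / (2 * b ^ 2))
          ((∫ ψ, (L d θ ψ - ∫ ψ', L d θ ψ' ∂PPsi) ^ 2 ∂PPsi) / (2 * a ^ 2)) :=
  jensen_gap_likelihood_marginalization_general PPsi L a b ha d θ hL
end
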